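/- arXiv:1104.1364 — 7 statements merged into one kernel-verified Lean document; each statement's English description precedes it below -/
import Mathlib

section
/- For real q with |q| < 1, the Lambert series identity holds: ∑_{n=1}^∞ d(n) q^n = ∑_{n=1}^∞ q^n / (1 - q^n), where d(n) is the divisor function. -/
open ArithmeticFunction

/-- Lambert series identity: `∑ d(n) qⁿ = ∑ qⁿ/(1-qⁿ)` for `|q| < 1`. -/
theorem lambert_series_divisor (q : ℝ) (hq : |q| < 1) :
    ∑' n : ℕ, ((Nat.divisors (n + 1)).card : ℝ) * q ^ (n + 1)
      = ∑' n : ℕ, q ^ (n + 1) / (1 - q ^ (n + 1)) := by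
  have h := tsum_pow_div_one_sub_eq_tsum_sigma (r := q) hq 0
  simp only [pow_zero, one_mul, sigma_zero_apply] at h
  rw [← tsum_pnat_eq_tsum_succ (f := fun n => q ^ n / (1 - q ^ n)), h,
    tsum_pnat_eq_tsum_succ (f := fun n => ((Nat.divisors n).card : ℝ) * q ^ n)]
end

section
/- The summatory divisor function satisfies Dirichlet's asymptotic formula: ∑_{n ≤ x} d(n) = x ln x + (2γ - 1) x + O(√x) as x → ∞, where γ is the Euler–Mascheroni constant. -/
/-! Dirichlet's hyperbola method. A lattice point `(a, b)` with `ab ≤ N` has `a ≤ √N` or `b ≤ √N`,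
so `∑_{n ≤ N} d(n) = 2 ∑_{a ≤ √N} ⌊N/a⌋ - ⌊√N⌋²`. Dropping the floors costs `O(√N)`, and
`∑_{a ≤ K} 1/a = log K + γ + O(1/K)` with `K = ⌊√N⌋` turns the main term into
`N log N + (2γ - 1) N + O(√N)`. Passing from `N = ⌊x⌋` to `x` only costs `O(log x)`. -/

open Filter Asymptotics Finset Real

namespace ArithmeticFunction

variable {R : Type*} [Semiring R]

theorem sum_Ioc_mul_add_sum_mul_sum_sqrt (f g : ArithmeticFunction R) (N : ℕ) :
    ∑ n ∈ Ioc 0 N, (f * g) n + (∑ a ∈ Ioc 0 N.sqrt, f a) * ∑ b ∈ Ioc 0 N.sqrt, g b =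
      ∑ a ∈ Ioc 0 N.sqrt, f a * ∑ b ∈ Ioc 0 (N / a), g b +
        ∑ b ∈ Ioc 0 N.sqrt, (∑ a ∈ Ioc 0 (N / b), f a) * g b := by
  have hKN : N.sqrt ≤ N := Nat.sqrt_le_self N
  have hKK : N.sqrt * N.sqrt ≤ N := Nat.sqrt_le N
  have hNK : N < (N.sqrt + 1) * (N.sqrt + 1) := Nat.lt_succ_sqrt N
  generalize N.sqrt = K at *
  rw [sum_Ioc_mul_eq_sum_prod_filter]
  set S := {x ∈ Ioc 0 N ×ˢ Ioc 0 N | x.1 * x.2 ≤ N}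
  have hunion : {x ∈ S | x.1 ≤ K} ∪ {x ∈ S | x.2 ≤ K} = S := by
    rw [filter_union_right, filter_true_of_mem]
    rintro ⟨a, b⟩ hab
    by_contra! h
    have : (K + 1) * (K + 1) ≤ a * b := Nat.mul_le_mul h.1 h.2
    simp only [S, mem_filter] at hab
    omega
  have hinter : {x ∈ S | x.1 ≤ K} ∩ {x ∈ S | x.2 ≤ K} = Ioc 0 K ×ˢ Ioc 0 K := by
    ext ⟨a, b⟩
    simp only [S, mem_inter, mem_filter, mem_product, mem_Ioc]
    constructor
    · omega
    · intro h
      have := Nat.mul_le_mul h.1.2 h.2.2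
      omega
  have hleft : ∑ x ∈ S with x.1 ≤ K, f x.1 * g x.2 =
      ∑ a ∈ Ioc 0 K, f a * ∑ b ∈ Ioc 0 (N / a), g b := by
    simp only [mul_sum]
    refine sum_finset_product _ _ _ fun ⟨a, b⟩ => ?_
    simp only [S, mem_filter, mem_product, mem_Ioc]
    rcases a.eq_zero_or_pos with rfl | ha
    · simp
    · have := Nat.le_mul_of_pos_right b ha
      rw [Nat.le_div_iff_mul_le ha, mul_comm a b]
      omega
  have hright : ∑ x ∈ S with x.2 ≤ K, f x.1 * g x.2 =
      ∑ b ∈ Ioc 0 K, (∑ a ∈ Ioc 0 (N / b), f a) * g b := by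
    simp only [sum_mul]
    refine sum_finset_product_right _ _ _ fun ⟨a, b⟩ => ?_
    simp only [S, mem_filter, mem_product, mem_Ioc]
    rcases b.eq_zero_or_pos with rfl | hb
    · simp
    · have := Nat.le_mul_of_pos_right a hb
      rw [Nat.le_div_iff_mul_le hb]
      omega
  rw [← hleft, ← hright, sum_mul_sum, ← sum_product', ← hinter,
    ← sum_union_inter (s₁ := {x ∈ S | x.1 ≤ K}), hunion]

end ArithmeticFunction

open ArithmeticFunction in
theorem Nat.sum_Ioc_card_divisors_add_sqrt_mul_sqrt (N : ℕ) :
    ∑ n ∈ Ioc 0 N, #n.divisors + N.sqrt * N.sqrt = 2 * ∑ a ∈ Ioc 0 N.sqrt, N / a := by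
  have h := sum_Ioc_mul_add_sum_mul_sum_sqrt (zeta : ArithmeticFunction ℕ) zeta N
  have hzeta (a : ℕ) : zeta a * (N / a) = N / a := by
    by_cases ha : a = 0 <;> simp [ha]
  have hsigma : (zeta * zeta : ArithmeticFunction ℕ) = sigma 0 := by
    rw [← zeta_mul_pow_eq_sigma, pow_zero_eq_zeta]
  simp only [sum_Ioc_zeta, hsigma, sigma_zero_apply, hzeta] at h
  rw [h, two_mul]
  exact congrArg _ (sum_congr rfl fun a _ => by rw [mul_comm, hzeta])

lemma Real.log_sub_log_le_div {x y : ℝ} (hx : 0 < x) (hy : 0 < y) :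
    log x - log y ≤ (x - y) / y := by
  rw [← log_div hx.ne' hy.ne', sub_div, div_self hy.ne']
  exact log_le_sub_one_of_pos (div_pos hx hy)

lemma Real.mul_log_sub_mul_log_mem_Icc {x y : ℝ} (hy : 1 ≤ y) (hyx : y ≤ x) :
    x * log x - y * log y ∈ Set.Icc (0 : ℝ) ((x - y) * (log x + 1)) := by
  have hy0 : 0 < y := by linarith
  constructor
  · exact sub_nonneg.2 (mul_le_mul hyx (log_le_log hy0 hyx) (log_nonneg hy) (by linarith))
  · calc x * log x - y * log y = (x - y) * log x + y * (log x - log y) := by ring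
      _ ≤ (x - y) * log x + (x - y) := by
        gcongr
        rw [← le_div_iff₀' hy0]
        exact log_sub_log_le_div (by linarith) hy0
      _ = (x - y) * (log x + 1) := by ring

lemma harmonic_eq_sum_Ioc_inv (K : ℕ) : (harmonic K : ℝ) = ∑ a ∈ Ioc 0 K, (a : ℝ)⁻¹ := by
  rw [harmonic_eq_sum_Icc, ← Finset.Icc_add_one_left_eq_Ioc, zero_add]
  push_cast
  rfl

lemma sum_Ioc_natCast_div_sub_mul_harmonic_mem_Icc (N K : ℕ) :
    ∑ a ∈ Ioc 0 K, ((N / a : ℕ) : ℝ) - N * harmonic K ∈ Set.Icc (-K : ℝ) 0 := by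
  rw [harmonic_eq_sum_Ioc_inv, mul_sum, ← sum_sub_distrib]
  have hterm : ∀ a ∈ Ioc 0 K, ((N / a : ℕ) : ℝ) - N * (a : ℝ)⁻¹ ∈ Set.Icc (-1 : ℝ) 0 := by
    intro a _
    rw [← div_eq_mul_inv, ← Nat.floor_div_eq_div (K := ℝ)]
    constructor
    · linarith [Nat.lt_floor_add_one ((N : ℝ) / a)]
    · linarith [Nat.floor_le (by positivity : (0 : ℝ) ≤ N / a)]
  constructor
  · simpa using sum_le_sum fun a ha => (hterm a ha).1
  · exact sum_nonpos fun a ha => (hterm a ha).2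

lemma harmonic_sub_log_sub_eulerMascheroniConstant_mem_Icc {K : ℕ} (hK : K ≠ 0) :
    (harmonic K : ℝ) - log K - eulerMascheroniConstant ∈ Set.Icc (0 : ℝ) (1 / K) := by
  have hlower := eulerMascheroniConstant_lt_eulerMascheroniSeq' K
  have hupper := eulerMascheroniSeq_lt_eulerMascheroniConstant K
  rw [eulerMascheroniSeq', if_neg hK] at hlower
  rw [eulerMascheroniSeq] at hupper
  have hK0 : (0 : ℝ) < K := by positivity
  have := log_sub_log_le_div (by positivity : (0 : ℝ) < K + 1) hK0
  rw [add_sub_cancel_left] at this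
  constructor <;> linarith

lemma log_sub_two_mul_log_sqrt_mem_Icc {N : ℕ} (hN : N ≠ 0) :
    log N - 2 * log N.sqrt ∈ Set.Icc (0 : ℝ) (2 / N.sqrt) := by
  have hK : 0 < N.sqrt := Nat.sqrt_pos.2 (Nat.pos_of_ne_zero hN)
  have hKK : (N.sqrt : ℝ) * N.sqrt ≤ N := by exact_mod_cast Nat.sqrt_le N
  have hNK : (N : ℝ) ≤ N.sqrt * N.sqrt + N.sqrt + N.sqrt := by exact_mod_cast N.sqrt_le_add
  have hK0 : (0 : ℝ) < N.sqrt := by exact_mod_cast hK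
  have hlogKK : 2 * log N.sqrt = log ((N.sqrt : ℝ) * N.sqrt) := by
    rw [log_mul hK0.ne' hK0.ne']; ring
  rw [hlogKK]
  constructor
  · exact sub_nonneg.2 (log_le_log (by positivity) hKK)
  · refine (log_sub_log_le_div (by positivity) (by positivity)).trans ?_
    rw [div_le_div_iff₀ (by positivity) hK0]
    nlinarith

lemma abs_sum_Icc_card_divisors_sub_le (N : ℕ) :
    |∑ n ∈ Icc 1 N, (#n.divisors : ℝ) - (N * log N + (2 * eulerMascheroniConstant - 1) * N)|
      ≤ 8 * √N := by
  rcases eq_or_ne N 0 with rfl | hN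
  · simp
  have hK : 0 < N.sqrt := Nat.sqrt_pos.2 (Nat.pos_of_ne_zero hN)
  have hK0 : (0 : ℝ) < N.sqrt := by exact_mod_cast hK
  have hNK : (N : ℝ) ≤ N.sqrt * N.sqrt + N.sqrt + N.sqrt := by exact_mod_cast N.sqrt_le_add
  have hKK : (N.sqrt : ℝ) * N.sqrt ≤ N := by exact_mod_cast Nat.sqrt_le N
  have hdivK : (N : ℝ) * (1 / N.sqrt) ≤ N.sqrt + 2 := by
    rw [mul_one_div, div_le_iff₀ hK0]
    linarith
  have hsum : ∑ n ∈ Icc 1 N, (#n.divisors : ℝ)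
      = 2 * ∑ a ∈ Ioc 0 N.sqrt, ((N / a : ℕ) : ℝ) - N.sqrt * N.sqrt := by
    rw [show Icc 1 N = Ioc 0 N from Icc_add_one_left_eq_Ioc 0 N, eq_sub_iff_add_eq]
    exact_mod_cast Nat.sum_Ioc_card_divisors_add_sqrt_mul_sqrt N
  obtain ⟨hS₁, hS₂⟩ := sum_Ioc_natCast_div_sub_mul_harmonic_mem_Icc N N.sqrt
  obtain ⟨hH₁, hH₂⟩ := harmonic_sub_log_sub_eulerMascheroniConstant_mem_Icc hK.ne'
  obtain ⟨hL₁, hL₂⟩ := log_sub_two_mul_log_sqrt_mem_Icc hN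
  have hN0 : (0 : ℝ) ≤ N := N.cast_nonneg
  have hH₁' := mul_nonneg hN0 hH₁
  have hH₂' := (mul_le_mul_of_nonneg_left hH₂ hN0).trans hdivK
  have hL₁' := mul_nonneg hN0 hL₁
  have hL₂' : (N : ℝ) * (log N - 2 * log N.sqrt) ≤ 2 * (N.sqrt + 2) := by
    have := mul_le_mul_of_nonneg_left hL₂ hN0
    rw [show (2 : ℝ) / N.sqrt = 2 * (1 / N.sqrt) by ring] at this
    linarith
  have hKs : (N.sqrt : ℝ) ≤ √N := Real.nat_sqrt_le_real_sqrt
  have hK1 : (1 : ℝ) ≤ N.sqrt := by exact_mod_cast hK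
  -- With `K = ⌊√N⌋`, `S = ∑_{a ≤ K} ⌊N/a⌋`, the error is `2 (S - N H_K) + 2N (H_K - log K - γ)`
  -- `- N (log N - 2 log K) + (N - K²)`, and each term is `O(K)`.
  rw [hsum, abs_le]
  constructor <;> linarith

lemma log_add_one_le_three_mul_sqrt {x : ℝ} (hx : 1 ≤ x) : log x + 1 ≤ 3 * √x := by
  have := log_le_rpow_div (by linarith : (0 : ℝ) ≤ x) (by norm_num : (0 : ℝ) < 1 / 2)
  rw [← sqrt_eq_rpow] at this
  linarith [one_le_sqrt.2 hx]

lemma isBigO_natFloor_sub_self_sqrt : (fun x : ℝ => (⌊x⌋₊ : ℝ) - x) =O[atTop] sqrt := by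
  refine .of_bound 1 (eventually_ge_atTop 1 |>.mono fun x hx => ?_)
  have hlt := Nat.lt_floor_add_one x
  have hle := Nat.floor_le (by linarith : (0 : ℝ) ≤ x)
  rw [norm_of_nonneg (sqrt_nonneg x), one_mul, norm_eq_abs, abs_le]
  constructor <;> linarith [one_le_sqrt.2 hx]

lemma isBigO_natFloor_mul_log_natFloor_sub_mul_log :
    (fun x : ℝ => (⌊x⌋₊ : ℝ) * log ⌊x⌋₊ - x * log x) =O[atTop] sqrt := by
  refine .of_bound 3 (eventually_ge_atTop 1 |>.mono fun x hx => ?_)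
  have hfloor : (1 : ℝ) ≤ ⌊x⌋₊ := by exact_mod_cast Nat.one_le_floor_iff x |>.2 hx
  obtain ⟨h₁, h₂⟩ := mul_log_sub_mul_log_mem_Icc hfloor (Nat.floor_le (by linarith))
  have hlt := Nat.lt_floor_add_one x
  rw [norm_of_nonneg (sqrt_nonneg x), norm_eq_abs, abs_sub_comm, abs_of_nonneg h₁]
  nlinarith [log_add_one_le_three_mul_sqrt hx, log_nonneg hx]

/-- Dirichlet's divisor asymptotics:
`∑_{n ≤ x} d(n) = x ln x + (2γ - 1) x + O(√x)` as `x → ∞`. -/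
theorem dirichlet_divisor_asymptotics :
    (fun x : ℝ => (∑ n ∈ Finset.Icc 1 ⌊x⌋₊, ((Nat.divisors n).card : ℝ))
        - (x * Real.log x + (2 * Real.eulerMascheroniConstant - 1) * x))
      =O[atTop] fun x : ℝ => Real.sqrt x := by
  have hdiv : (fun x : ℝ => ∑ n ∈ Icc 1 ⌊x⌋₊, (#n.divisors : ℝ) -
      (⌊x⌋₊ * log ⌊x⌋₊ + (2 * eulerMascheroniConstant - 1) * ⌊x⌋₊)) =O[atTop] sqrt := by
    refine .of_bound 8 (eventually_ge_atTop 0 |>.mono fun x hx => ?_)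
    rw [norm_of_nonneg (sqrt_nonneg x)]
    exact (abs_sum_Icc_card_divisors_sub_le _).trans (by gcongr; exact Nat.floor_le hx)
  have hlin := isBigO_natFloor_sub_self_sqrt.const_mul_left (2 * eulerMascheroniConstant - 1)
  refine ((hdiv.add isBigO_natFloor_mul_log_natFloor_sub_mul_log).add hlin).congr_left
    fun x => ?_
  ring
end

section
/- The eigenvalue counting function N(λ) := #{(n,m) ∈ ℕ×ℕ : (nm)² ≤ λ} satisfies the non-standard Weyl asymptotics N(λ) = (√λ/2) ln λ + (2γ - 1)√λ + O(λ^{1/4}) as λ → ∞. -/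
open Filter Asymptotics Finset Real

/-!
Writing `x = √λ`, the condition `(nm)² ≤ λ` is `nm ≤ ⌊x⌋`, so `N(λ)` counts lattice points under
the hyperbola `nm = K := ⌊x⌋`. Dirichlet's hyperbola method counts them as the points with
`n ≤ √K` plus those with `m ≤ √K` minus the square `[1, √K]²` where both hold, giving
`N = 2 ∑_{n ≤ √x} ⌊x/n⌋ - ⌊√x⌋²`. Replacing `⌊x/n⌋` by `x/n` costs `O(√x)`, and
`∑_{n ≤ M} 1/n = log M + γ + O(1/M)` with `M = ⌊√x⌋` turns `2x H_M - M²` into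
`x log x + (2γ - 1) x + O(√x)`; finally `√x = λ^{1/4}`.
-/

def hyperbolaPoints (K : ℕ) : Finset (ℕ × ℕ) :=
  {p ∈ Icc 1 K ×ˢ Icc 1 K | p.1 * p.2 ≤ K}

theorem mem_hyperbolaPoints {K : ℕ} {p : ℕ × ℕ} :
    p ∈ hyperbolaPoints K ↔ 0 < p.1 ∧ 0 < p.2 ∧ p.1 * p.2 ≤ K := by
  simp only [hyperbolaPoints, mem_filter, mem_product, mem_Icc]
  constructor
  · rintro ⟨⟨⟨h1, -⟩, h2, -⟩, hK⟩
    exact ⟨h1, h2, hK⟩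
  · rintro ⟨h1, h2, hK⟩
    exact ⟨⟨⟨h1, (Nat.le_mul_of_pos_right _ h2).trans hK⟩,
      h2, (Nat.le_mul_of_pos_left _ h1).trans hK⟩, hK⟩

theorem card_filter_fst_le_hyperbolaPoints (K M : ℕ) :
    #{p ∈ hyperbolaPoints K | p.1 ≤ M} = ∑ n ∈ Icc 1 M, K / n := by
  rw [card_eq_sum_card_fiberwise (f := Prod.fst) (t := Icc 1 M) fun p hp => by
    rw [mem_coe, mem_filter, mem_hyperbolaPoints] at hp
    exact mem_coe.2 (mem_Icc.2 ⟨hp.1.1, hp.2⟩)]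
  refine sum_congr rfl fun n hn => ?_
  have hn1 : 0 < n := (mem_Icc.1 hn).1
  have hfiber : {p ∈ {p ∈ hyperbolaPoints K | p.1 ≤ M} | p.1 = n} = {n} ×ˢ Icc 1 (K / n) := by
    ext ⟨a, b⟩
    simp only [mem_filter, mem_hyperbolaPoints, mem_product, mem_singleton, mem_Icc,
      Nat.le_div_iff_mul_le hn1]
    constructor
    · rintro ⟨⟨⟨-, hb, hK⟩, -⟩, rfl⟩
      exact ⟨rfl, hb, by rwa [mul_comm]⟩
    · rintro ⟨rfl, hb, hK⟩
      exact ⟨⟨⟨hn1, hb, by rwa [mul_comm]⟩, (mem_Icc.1 hn).2⟩, rfl⟩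
  simp [hfiber]

theorem card_filter_snd_le_hyperbolaPoints (K M : ℕ) :
    #{p ∈ hyperbolaPoints K | p.2 ≤ M} = #{p ∈ hyperbolaPoints K | p.1 ≤ M} := by
  refine card_nbij' Prod.swap Prod.swap ?_ ?_ (fun _ _ => rfl) (fun _ _ => rfl) <;>
  · rintro ⟨a, b⟩
    simp only [coe_filter, Set.mem_ofPred_eq, mem_hyperbolaPoints, Prod.swap_prod_mk]
    rintro ⟨⟨ha, hb, hK⟩, hM⟩
    exact ⟨⟨hb, ha, by rwa [mul_comm]⟩, hM⟩

theorem card_hyperbolaPoints_add_sqrt_mul_sqrt (K : ℕ) :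
    #(hyperbolaPoints K) + K.sqrt * K.sqrt = 2 * ∑ n ∈ Icc 1 K.sqrt, K / n := by
  set M := K.sqrt
  have hunion : {p ∈ hyperbolaPoints K | p.1 ≤ M} ∪ {p ∈ hyperbolaPoints K | p.2 ≤ M} =
      hyperbolaPoints K := by
    rw [← filter_or]
    refine filter_true_of_mem fun p hp => ?_
    rw [mem_hyperbolaPoints] at hp
    by_contra! h
    have : (M + 1) * (M + 1) ≤ p.1 * p.2 := Nat.mul_le_mul h.1 h.2
    exact (Nat.lt_succ_sqrt K).not_ge (this.trans hp.2.2)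
  have hinter : {p ∈ hyperbolaPoints K | p.1 ≤ M} ∩ {p ∈ hyperbolaPoints K | p.2 ≤ M} =
      Icc 1 M ×ˢ Icc 1 M := by
    ext ⟨a, b⟩
    simp only [mem_inter, mem_filter, mem_hyperbolaPoints, mem_product, mem_Icc]
    constructor
    · rintro ⟨⟨⟨ha, hb, -⟩, haM⟩, -, hbM⟩
      exact ⟨⟨ha, haM⟩, hb, hbM⟩
    · rintro ⟨⟨ha, haM⟩, hb, hbM⟩
      have hK : a * b ≤ K := (Nat.mul_le_mul haM hbM).trans (Nat.sqrt_le K)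
      exact ⟨⟨⟨ha, hb, hK⟩, haM⟩, ⟨ha, hb, hK⟩, hbM⟩
  have := card_union_add_card_inter {p ∈ hyperbolaPoints K | p.1 ≤ M}
    {p ∈ hyperbolaPoints K | p.2 ≤ M}
  rw [hunion, hinter, card_filter_snd_le_hyperbolaPoints, card_filter_fst_le_hyperbolaPoints,
    card_product, Nat.card_Icc, Nat.add_sub_cancel] at this
  omega

theorem abs_harmonic_sub_log_sub_eulerMascheroniConstant_le {n : ℕ} (hn : n ≠ 0) :
    |(harmonic n : ℝ) - log n - eulerMascheroniConstant| ≤ 1 / n := by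
  have hlower := eulerMascheroniSeq_lt_eulerMascheroniConstant n
  have hupper := eulerMascheroniConstant_lt_eulerMascheroniSeq' n
  rw [eulerMascheroniSeq] at hlower
  rw [eulerMascheroniSeq', if_neg hn] at hupper
  have hn0 : (0 : ℝ) < n := by positivity
  have hlog : log (n + 1) - log n ≤ 1 / n := by
    rw [← log_div (by positivity) hn0.ne']
    calc log ((n + 1) / n) ≤ (n + 1) / n - 1 := log_le_sub_one_of_pos (by positivity)
      _ = 1 / n := by field_simp; ring
  rw [abs_le]
  constructor <;> linarith

theorem abs_sum_natFloor_div_sub_mul_harmonic_le {x : ℝ} (hx : 0 ≤ x) (M : ℕ) :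
    |∑ n ∈ Icc 1 M, (⌊x / n⌋₊ : ℝ) - x * harmonic M| ≤ M := by
  have hx_harmonic : x * harmonic M = ∑ n ∈ Icc 1 M, x / n := by
    simp [harmonic_eq_sum_Icc, mul_sum, div_eq_mul_inv]
  rw [hx_harmonic, ← sum_sub_distrib]
  calc |∑ n ∈ Icc 1 M, ((⌊x / n⌋₊ : ℝ) - x / n)|
      ≤ ∑ n ∈ Icc 1 M, |(⌊x / n⌋₊ : ℝ) - x / n| := abs_sum_le_sum_abs _ _
    _ ≤ ∑ _n ∈ Icc 1 M, (1 : ℝ) := by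
      refine sum_le_sum fun n _ => abs_le.2 ⟨?_, ?_⟩
      · linarith [Nat.lt_floor_add_one (x / n)]
      · linarith [Nat.floor_le (div_nonneg hx n.cast_nonneg)]
    _ = M := by simp

theorem log_sub_log_natFloor_le {y : ℝ} (hy : 1 ≤ y) :
    log y - log ⌊y⌋₊ ≤ 1 / ⌊y⌋₊ := by
  have hM : (0 : ℝ) < ⌊y⌋₊ := by exact_mod_cast Nat.floor_pos.2 hy
  rw [← log_div (by positivity) hM.ne']
  calc log (y / ⌊y⌋₊) ≤ y / ⌊y⌋₊ - 1 := log_le_sub_one_of_pos (by positivity)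
    _ = (y - ⌊y⌋₊) / ⌊y⌋₊ := by field_simp
    _ ≤ 1 / ⌊y⌋₊ := by
      gcongr
      linarith [Nat.lt_floor_add_one y]

theorem Nat.sqrt_floor_eq_floor_sqrt {x : ℝ} (hx : 0 ≤ x) : Nat.sqrt ⌊x⌋₊ = ⌊√x⌋₊ := by
  symm
  rw [Nat.floor_eq_iff (sqrt_nonneg x), Real.le_sqrt (by positivity) hx,
    Real.sqrt_lt' (by positivity)]
  constructor
  · calc ((Nat.sqrt ⌊x⌋₊ : ℕ) : ℝ) ^ 2 = ((Nat.sqrt ⌊x⌋₊ ^ 2 : ℕ) : ℝ) := by push_cast; rfl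
      _ ≤ ⌊x⌋₊ := by exact_mod_cast Nat.sqrt_le' _
      _ ≤ x := Nat.floor_le hx
  · calc x < ⌊x⌋₊ + 1 := Nat.lt_floor_add_one x
      _ ≤ (((Nat.sqrt ⌊x⌋₊ + 1) ^ 2 : ℕ) : ℝ) := by exact_mod_cast Nat.lt_succ_sqrt' _
      _ = _ := by push_cast; rfl

theorem cast_card_hyperbolaPoints_floor {x : ℝ} (hx : 0 ≤ x) :
    (#(hyperbolaPoints ⌊x⌋₊) : ℝ) = 2 * ∑ n ∈ Icc 1 ⌊√x⌋₊, (⌊x / n⌋₊ : ℝ) - ⌊√x⌋₊ ^ 2 := by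
  have h := card_hyperbolaPoints_add_sqrt_mul_sqrt ⌊x⌋₊
  simp only [Nat.sqrt_floor_eq_floor_sqrt hx, ← Nat.floor_div_natCast] at h
  rw [eq_sub_iff_add_eq, sq]
  exact_mod_cast h

theorem abs_card_hyperbolaPoints_sub_le {x : ℝ} (hx : 1 ≤ x) :
    |(#(hyperbolaPoints ⌊x⌋₊) : ℝ) - (x * log x + (2 * eulerMascheroniConstant - 1) * x)|
      ≤ 12 * √x := by
  set y := √x
  set M := ⌊y⌋₊
  have hy : 1 ≤ y := one_le_sqrt.2 hx
  have hyy : y * y = x := mul_self_sqrt (by linarith)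
  have hM0 : M ≠ 0 := (Nat.floor_pos.2 hy).ne'
  have hM1 : (1 : ℝ) ≤ M := by exact_mod_cast Nat.one_le_iff_ne_zero.2 hM0
  have hM : (0 : ℝ) < M := by positivity
  have hMy : (M : ℝ) ≤ y := Nat.floor_le (by linarith)
  have hyM : y < M + 1 := Nat.lt_floor_add_one y
  have hxM : x * (1 / M) ≤ 2 * y := by
    rw [mul_one_div, div_le_iff₀ hM, ← hyy]
    nlinarith [show y ≤ 2 * M by linarith]
  have hsum := abs_sum_natFloor_div_sub_mul_harmonic_le (by linarith : 0 ≤ x) M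
  have hharmonic : |x * (harmonic M - log M - eulerMascheroniConstant)| ≤ 2 * y := by
    rw [abs_mul, abs_of_nonneg (by linarith)]
    exact (mul_le_mul_of_nonneg_left
      (abs_harmonic_sub_log_sub_eulerMascheroniConstant_le hM0) (by linarith)).trans hxM
  have hlog : 0 ≤ x * (log y - log M) ∧ x * (log y - log M) ≤ 2 * y :=
    ⟨mul_nonneg (by linarith) (sub_nonneg.2 (log_le_log hM hMy)),
      (mul_le_mul_of_nonneg_left (log_sub_log_natFloor_le hy) (by linarith)).trans hxM⟩
  have hlog_x : log x = 2 * log y := by rw [← hyy, log_mul (by positivity) (by positivity)]; ring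
  rw [cast_card_hyperbolaPoints_floor (by linarith), hlog_x]
  rw [abs_le] at hsum hharmonic ⊢
  constructor <;> nlinarith

theorem ncard_setOf_mul_sq_le {lam : ℝ} (hlam : 0 ≤ lam) :
    {p : ℕ × ℕ | 0 < p.1 ∧ 0 < p.2 ∧ (((p.1 * p.2 : ℕ) : ℝ)) ^ 2 ≤ lam}.ncard
      = #(hyperbolaPoints ⌊√lam⌋₊) := by
  rw [← Set.ncard_coe_finset]
  congr 1
  ext p
  simp only [Set.mem_ofPred_eq, mem_coe, mem_hyperbolaPoints, Nat.le_floor_iff (sqrt_nonneg lam),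
    Real.le_sqrt (Nat.cast_nonneg _) hlam, sq]

/-- Non-standard Weyl asymptotics for the eigenvalue counting function
`N(λ) = #{(n,m) : (nm)² ≤ λ} = (√λ/2) ln λ + (2γ-1)√λ + O(λ^{1/4})` as `λ → ∞`. -/
theorem weyl_asymptotics :
    (fun lam : ℝ =>
        ((Set.ncard {p : ℕ × ℕ | 0 < p.1 ∧ 0 < p.2 ∧ (((p.1 * p.2 : ℕ) : ℝ)) ^ 2 ≤ lam} : ℝ))
          - (Real.sqrt lam / 2 * Real.log lam
              + (2 * Real.eulerMascheroniConstant - 1) * Real.sqrt lam))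
      =O[atTop] fun lam : ℝ => lam ^ ((1 : ℝ) / 4) := by
  refine IsBigO.of_bound 12 ?_
  filter_upwards [eventually_ge_atTop 1] with lam hlam
  have hlam0 : 0 ≤ lam := by linarith
  have hmain : √lam / 2 * log lam = √lam * log √lam := by rw [log_sqrt hlam0]; ring
  have hquarter : ‖lam ^ ((1 : ℝ) / 4)‖ = √(√lam) := by
    rw [norm_of_nonneg (by positivity), sqrt_eq_rpow, sqrt_eq_rpow, ← rpow_mul hlam0]
    norm_num
  rw [ncard_setOf_mul_sq_le hlam0, hmain, hquarter, norm_eq_abs]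
  exact abs_card_hyperbolaPoints_sub_le (one_le_sqrt.2 hlam)
end

section
/- The integral ∫_0^∞ [1/(e^t - 1) - e^{-t}/t] dt equals the Euler–Mascheroni constant γ. -/
/-!
Since `1 / (eᵗ - 1)` is the derivative of `log (1 - e⁻ᵗ)` and `e⁻ᵗ / t - e⁻ᵗ log t` is the
derivative of `e⁻ᵗ log t`, the integrand plus `e⁻ᵗ log t` is the derivative of
`G t = log (1 - e⁻ᵗ) - e⁻ᵗ log t`, which tends to `0` both as `t → 0⁺` and as `t → ∞`.
Hence the integral equals `-∫₀^∞ e⁻ᵗ log t dt = -Γ'(1) = γ`. Integrability of the integrand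
follows from `0 ≤ 1 / (eᵗ - 1) - e⁻ᵗ / t ≤ e⁻ᵗ`, both inequalities being instances of
`1 + x ≤ eˣ`.
-/

open Real Set MeasureTheory Filter Topology

lemma integral_ofReal_log_mul_exp_neg :
    ∫ t : ℝ in Ioi 0, ((log t * exp (-t) : ℝ) : ℂ) = -eulerMascheroniConstant := by
  have hΓ : Complex.Gamma =ᶠ[𝓝 1] Complex.GammaIntegral := by
    filter_upwards [(isOpen_lt continuous_const Complex.continuous_re).mem_nhds
      (by simp : (0 : ℝ) < (1 : ℂ).re)] with s hs
    exact Complex.Gamma_eq_integral hs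
  have h := ((Complex.hasDerivAt_GammaIntegral (by simp)).congr_of_eventuallyEq hΓ).unique
    Complex.hasDerivAt_Gamma_one
  simpa using h

lemma integrableOn_log_mul_exp_neg : IntegrableOn (fun t => log t * exp (-t)) (Ioi 0) := by
  have hγ : (-eulerMascheroniConstant : ℂ) ≠ 0 := by
    have := one_half_lt_eulerMascheroniConstant
    norm_cast
    linarith
  have h := (Integrable.of_integral_ne_zero (integral_ofReal_log_mul_exp_neg.trans_ne hγ)).re
  simp only [RCLike.re_to_complex, Complex.ofReal_re] at h
  exact h

lemma integral_log_mul_exp_neg : ∫ t in Ioi 0, log t * exp (-t) = -eulerMascheroniConstant := by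
  apply Complex.ofReal_injective
  rw [← integral_complex_ofReal, integral_ofReal_log_mul_exp_neg, Complex.ofReal_neg]

lemma exp_neg_div_le_one_div_exp_sub_one {t : ℝ} (ht : 0 < t) :
    exp (-t) / t ≤ 1 / (exp t - 1) := by
  rw [div_le_div_iff₀ ht (sub_pos.2 (one_lt_exp_iff.2 ht)), mul_sub, ← exp_add, neg_add_cancel,
    exp_zero]
  linarith [add_one_le_exp (-t)]

lemma one_div_exp_sub_one_sub_exp_neg_div_le {t : ℝ} (ht : 0 < t) :
    1 / (exp t - 1) - exp (-t) / t ≤ exp (-t) := by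
  rw [exp_neg, sub_le_iff_le_add, div_le_iff₀ (sub_pos.2 (one_lt_exp_iff.2 ht))]
  field_simp
  linarith [add_one_le_exp t]

lemma integrableOn_one_div_exp_sub_one_sub_exp_neg_div :
    IntegrableOn (fun t => 1 / (exp t - 1) - exp (-t) / t) (Ioi 0) := by
  have hcont : ContinuousOn (fun t => 1 / (exp t - 1) - exp (-t) / t) (Ioi 0) := by
    intro t (ht : 0 < t)
    have h1 : exp t - 1 ≠ 0 := (sub_pos.2 (one_lt_exp_iff.2 ht)).ne'
    have h2 : t ≠ 0 := ht.ne'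
    exact ContinuousAt.continuousWithinAt (by fun_prop (disch := assumption))
  refine (exp_neg_integrableOn_Ioi 0 one_pos).mono'
    (hcont.aestronglyMeasurable measurableSet_Ioi) ?_
  filter_upwards [ae_restrict_mem measurableSet_Ioi] with t (ht : 0 < t)
  rw [norm_of_nonneg (sub_nonneg.2 (exp_neg_div_le_one_div_exp_sub_one ht)), neg_one_mul]
  exact one_div_exp_sub_one_sub_exp_neg_div_le ht

lemma hasDerivAt_log_one_sub_exp_neg_sub_log_mul_exp_neg {t : ℝ} (ht : 0 < t) :
    HasDerivAt (fun x => log (1 - exp (-x)) - log x * exp (-x))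
      (1 / (exp t - 1) - exp (-t) / t + log t * exp (-t)) t := by
  have hexp : HasDerivAt (fun x => exp (-x)) (-exp (-t)) t := by
    simpa using (hasDerivAt_neg t).exp
  have h1 : 0 < 1 - exp (-t) := by simp [ht]
  refine (((hexp.const_sub 1).log h1.ne').sub ((hasDerivAt_log ht.ne').mul hexp)).congr_deriv ?_
  have h2 : exp t - 1 ≠ 0 := (sub_pos.2 (one_lt_exp_iff.2 ht)).ne'
  rw [exp_neg]
  field_simp
  ring

lemma tendsto_one_sub_exp_neg_div_nhdsGT_zero :
    Tendsto (fun t => (1 - exp (-t)) / t) (𝓝[>] 0) (𝓝 1) := by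
  simpa [div_eq_inv_mul, neg_add_eq_sub] using
    ((hasDerivAt_neg 0).exp.neg).tendsto_slope_zero_right

lemma tendsto_log_one_sub_exp_neg_sub_log_mul_exp_neg_nhdsGT_zero :
    Tendsto (fun t => log (1 - exp (-t)) - log t * exp (-t)) (𝓝[>] 0) (𝓝 0) := by
  have hr := tendsto_one_sub_exp_neg_div_nhdsGT_zero
  have hlog : Tendsto (fun t => t * log t) (𝓝[>] 0) (𝓝 0) := by
    simpa using (continuous_mul_log.tendsto 0).mono_left nhdsWithin_le_nhds
  have h := ((continuousAt_log one_ne_zero).tendsto.comp hr).add (hr.mul hlog)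
  rw [log_one, one_mul, add_zero] at h
  refine h.congr' ?_
  filter_upwards [self_mem_nhdsWithin] with t (ht : 0 < t)
  have h1 : 0 < 1 - exp (-t) := by simp [ht]
  rw [Function.comp_apply, log_div h1.ne' ht.ne']
  field_simp
  ring

lemma tendsto_log_one_sub_exp_neg_sub_log_mul_exp_neg_atTop :
    Tendsto (fun t => log (1 - exp (-t)) - log t * exp (-t)) atTop (𝓝 0) := by
  have hexp : Tendsto (fun t => exp (-t)) atTop (𝓝 0) := tendsto_exp_neg_atTop_nhds_zero
  have h1 : Tendsto (fun t => log (1 - exp (-t))) atTop (𝓝 0) := by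
    have h : Tendsto (fun t => 1 - exp (-t)) atTop (𝓝 1) := by simpa using hexp.const_sub 1
    simpa [Function.comp_def] using (continuousAt_log one_ne_zero).tendsto.comp h
  have h2 : Tendsto (fun t => log t * exp (-t)) atTop (𝓝 0) :=
    (isLittleO_log_id_atTop.mul_isBigO (Asymptotics.isBigO_refl _ _)).trans_tendsto
      (by simpa using tendsto_pow_mul_exp_neg_atTop_nhds_zero 1)
  simpa using h1.sub h2

/-- `∫₀^∞ [1/(eᵗ - 1) - e^{-t}/t] dt = γ`, the Euler–Mascheroni constant. -/
theorem integral_eq_eulerMascheroni :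
    ∫ t in Set.Ioi (0 : ℝ), (1 / (Real.exp t - 1) - Real.exp (-t) / t)
      = Real.eulerMascheroniConstant := by
  set G : ℝ → ℝ := fun x => log (1 - exp (-x)) - log x * exp (-x)
  -- `G 0 = 0` holds for the junk value `log 0 = 0`
  have hG0 : ContinuousWithinAt G (Ici 0) 0 := by
    rw [← continuousWithinAt_Ioi_iff_Ici, ContinuousWithinAt]
    simpa [G] using tendsto_log_one_sub_exp_neg_sub_log_mul_exp_neg_nhdsGT_zero
  have hFTC := integral_Ioi_of_hasDerivAt_of_tendsto hG0
    (fun t ht => hasDerivAt_log_one_sub_exp_neg_sub_log_mul_exp_neg ht)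
    (integrableOn_one_div_exp_sub_one_sub_exp_neg_div.add integrableOn_log_mul_exp_neg)
    tendsto_log_one_sub_exp_neg_sub_log_mul_exp_neg_atTop
  rw [integral_add integrableOn_one_div_exp_sub_one_sub_exp_neg_div integrableOn_log_mul_exp_neg,
    integral_log_mul_exp_neg] at hFTC
  simp only [G, neg_zero, exp_zero, sub_self, log_zero, zero_mul] at hFTC
  linarith
end

section
/- The regularized trace of the resolvent τ(k) := ∑_{n=1}^∞ d(n) [1/(n+k) - 1/n] converges absolutely for all real k not in -ℕ, and satisfies τ(k) = -∑_{n=1}^∞ (1/n)[ψ(1 + k/n) + γ], where ψ is the digamma function. -/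
/-!
Counting the factorizations `n = a * b` turns `τ(k)` into the double series
`∑_{a,b ≥ 1} [1/(ab + k) - 1/(ab)]`, whose terms are `O(1/(ab)²)`, so it converges absolutely and
may be summed over `b` first. For fixed `a` the inner sum is
`(1/a) ∑_b [1/(b + k/a) - 1/b] = -(1/a) (ψ(1 + k/a) + γ)` by the series for `ψ`.

That series is proved by a Bohr–Mollerup type uniqueness argument: `ψ` and the series both satisfy
`f (x + 1) = f x + 1/x`, are monotone on `(0, ∞)` (for `ψ` by log-convexity of `Γ`) and agree at
`1`, which forces them to agree on `(0, ∞)`; the functional equation then carries the equality to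
every `x ∉ -ℕ`.
-/

open Real Filter Topology Finset Asymptotics

local notation "γ" => Real.eulerMascheroniConstant

/-- The digamma function `ψ = Γ'/Γ`. -/
noncomputable def digamma (x : ℝ) : ℝ := deriv Real.Gamma x / Real.Gamma x

theorem isBigO_one_div_add_sub_one_div (a b : ℝ) :
    (fun x : ℝ => 1 / (x + a) - 1 / (x + b)) =O[atTop] fun x => 1 / x ^ 2 := by
  refine IsBigO.of_bound (4 * |b - a|) ?_
  filter_upwards [eventually_ge_atTop (2 * (|a| + |b|) + 1)] with x hx
  have hxa : x / 2 ≤ x + a := by linarith [neg_abs_le a, abs_nonneg b]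
  have hxb : x / 2 ≤ x + b := by linarith [neg_abs_le b, abs_nonneg a]
  have hx0 : 0 < x / 2 := by linarith [abs_nonneg a, abs_nonneg b]
  rw [div_sub_div _ _ (by linarith) (by linarith), norm_div, norm_mul, norm_of_nonneg
    (by linarith : 0 ≤ x + a), norm_of_nonneg (by linarith : 0 ≤ x + b), norm_of_nonneg
    (by positivity : (0 : ℝ) ≤ 1 / x ^ 2), Real.norm_eq_abs]
  calc |1 * (x + b) - (x + a) * 1| / ((x + a) * (x + b))
      ≤ |b - a| / (x / 2 * (x / 2)) := by
        rw [show 1 * (x + b) - (x + a) * 1 = b - a by ring]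
        gcongr
        linarith
    _ = 4 * |b - a| * (1 / x ^ 2) := by ring

theorem summable_one_div_add_sub_one_div (a b : ℝ) :
    Summable fun m : ℕ => 1 / (m + a) - 1 / (m + b) :=
  summable_of_isBigO_nat (Real.summable_one_div_nat_pow.mpr one_lt_two)
    ((isBigO_one_div_add_sub_one_div a b).comp_tendsto tendsto_natCast_atTop_atTop)

theorem tendsto_mul_succ_succ_cofinite_atTop :
    Tendsto (fun p : ℕ × ℕ => (p.1 + 1) * (p.2 + 1)) cofinite atTop := by
  refine tendsto_atTop.mpr fun n => eventually_cofinite.mpr ?_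
  refine ((Set.finite_Iio n).prod (Set.finite_Iio n)).subset fun p hp => ?_
  simp only [Set.mem_ofPred_eq, not_le] at hp
  constructor <;> simp only [Set.mem_Iio] <;> nlinarith

theorem summable_comp_mul_succ_succ_of_isBigO {E : Type*} [NormedAddCommGroup E]
    [CompleteSpace E] {f : ℕ → E} (hf : f =O[atTop] fun n => 1 / (n : ℝ) ^ 2) :
    Summable fun p : ℕ × ℕ => f ((p.1 + 1) * (p.2 + 1)) := by
  have hsq : Summable fun n : ℕ => 1 / ((n : ℝ) + 1) ^ 2 := by
    exact_mod_cast (summable_nat_add_iff 1).mpr (Real.summable_one_div_nat_pow.mpr one_lt_two)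
  refine summable_of_isBigO ?_ (hf.comp_tendsto tendsto_mul_succ_succ_cofinite_atTop)
  refine (hsq.mul_of_nonneg hsq (fun _ => by positivity) fun _ => by positivity).congr fun p => ?_
  simp only [Function.comp_apply, one_div_mul_one_div, ← mul_pow]
  push_cast
  rfl

theorem hasSum_card_divisors_smul {α : Type*} [AddCommMonoid α] [TopologicalSpace α]
    [ContinuousAdd α] [RegularSpace α] {f : ℕ → α} {s : α}
    (h : HasSum (fun p : ℕ × ℕ => f ((p.1 + 1) * (p.2 + 1))) s) :
    HasSum (fun n : ℕ => (n + 1).divisors.card • f (n + 1)) s := by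
  have hpnat : HasSum (fun p : ℕ+ × ℕ+ => f (p.1 * p.2)) s := by
    simpa [Function.comp_def, PNat.natPred_add_one] using
      (Equiv.pnatEquivNat.prodCongr Equiv.pnatEquivNat).hasSum_iff.mpr h
  have hsigma := sigmaAntidiagonalEquivProd.hasSum_iff.mpr hpnat
  refine hasSum_pnat_iff_hasSum_succ (f := fun n => n.divisors.card • f n) |>.mp
    (hsigma.sigma fun n => ?_)
  convert hasSum_fintype fun _ : (n : ℕ).divisorsAntidiagonal => f n using 1
  · exact funext fun x => congrArg f (divisorsAntidiagonalFactors_eq x)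
  · simp [← Nat.map_div_right_divisors]

theorem hasSum_sub_succ_of_tendsto {α : Type*} [AddCommGroup α] [TopologicalSpace α]
    [IsTopologicalAddGroup α] [T2Space α] {f : ℕ → α} (hs : Summable fun n => f n - f (n + 1))
    (hf : Tendsto f atTop (𝓝 0)) : HasSum (fun n => f n - f (n + 1)) (f 0) := by
  refine hs.hasSum_iff_tendsto_nat.mpr ?_
  simp_rw [Finset.sum_range_sub']
  simpa using tendsto_const_nhds.sub hf

theorem tendsto_one_div_natCast_add_atTop (a : ℝ) :
    Tendsto (fun n : ℕ => 1 / ((n : ℝ) + a)) atTop (𝓝 0) := by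
  simp only [one_div]
  exact (tendsto_natCast_atTop_atTop.atTop_add (tendsto_const_nhds (x := a))).inv_tendsto_atTop

theorem Real.deriv_Gamma_add_one {x : ℝ} (hx : ∀ m : ℕ, x ≠ -m) :
    deriv Gamma (x + 1) = Gamma x + x * deriv Gamma x := by
  have hx0 : x ≠ 0 := by simpa using hx 0
  have hmul : HasDerivAt (fun y => y * Gamma y) (1 * Gamma x + x * deriv Gamma x) x :=
    (hasDerivAt_id x).mul (differentiableAt_Gamma hx).hasDerivAt
  have hshift : (fun y => Gamma (y + 1)) =ᶠ[𝓝 x] fun y => y * Gamma y := by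
    filter_upwards [eventually_ne_nhds hx0] with y hy using Gamma_add_one hy
  rw [← deriv_comp_add_const, hshift.deriv_eq, hmul.deriv, one_mul]

theorem digamma_add_one {x : ℝ} (hx : ∀ m : ℕ, x ≠ -m) : digamma (x + 1) = digamma x + 1 / x := by
  have hx0 : x ≠ 0 := by simpa using hx 0
  have hG : Gamma x ≠ 0 := Gamma_ne_zero hx
  rw [digamma, digamma, deriv_Gamma_add_one hx, Gamma_add_one hx0]
  field_simp
  ring

theorem digamma_one : digamma 1 = -γ := by
  rw [digamma, hasDerivAt_Gamma_one.deriv, Gamma_one, div_one]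

theorem monotoneOn_digamma : MonotoneOn digamma (Set.Ioi 0) := by
  have hdiff : ∀ x ∈ Set.Ioi (0 : ℝ), DifferentiableAt ℝ Gamma x := fun x hx =>
    differentiableAt_Gamma fun m h => by linarith [Set.mem_Ioi.mp hx, m.cast_nonneg (α := ℝ)]
  refine (convexOn_log_Gamma.monotoneOn_deriv fun x hx => ?_).congr fun x hx => ?_
  · exact (hdiff x hx).log (Gamma_pos_of_pos hx).ne'
  · exact deriv.log (hdiff x hx) (Gamma_pos_of_pos hx).ne'

noncomputable def digammaSeries (z : ℝ) : ℝ := -γ + ∑' m : ℕ, (1 / ((m : ℝ) + 1) - 1 / (m + z))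

theorem digammaSeries_add_one (z : ℝ) : digammaSeries (z + 1) = digammaSeries z + 1 / z := by
  have htele := hasSum_sub_succ_of_tendsto (f := fun m : ℕ => 1 / ((m : ℝ) + z))
    ((summable_one_div_add_sub_one_div z (z + 1)).congr fun m => by push_cast; ring_nf)
    (tendsto_one_div_natCast_add_atTop z)
  have hsum := (summable_one_div_add_sub_one_div 1 z).hasSum.add htele
  rw [Nat.cast_zero, zero_add] at hsum
  rw [digammaSeries, digammaSeries, add_assoc, ← hsum.tsum_eq]
  congr 2 with m
  push_cast
  ring

theorem digammaSeries_one : digammaSeries 1 = -γ := by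
  simp [digammaSeries]

theorem monotoneOn_digammaSeries : MonotoneOn digammaSeries (Set.Ioi 0) := by
  intro u (hu : 0 < u) v _ huv
  refine add_le_add_right ((summable_one_div_add_sub_one_div 1 u).tsum_le_tsum (fun m => ?_)
    (summable_one_div_add_sub_one_div 1 v)) _
  have : 1 / ((m : ℝ) + v) ≤ 1 / (m + u) := one_div_le_one_div_of_le (by positivity) (by linarith)
  linarith

theorem add_natCast_eq_add_sum {f : ℝ → ℝ} (hf : ∀ x > 0, f (x + 1) = f x + 1 / x) {x : ℝ}
    (hx : 0 < x) (n : ℕ) : f (x + n) = f x + ∑ j ∈ range n, 1 / (x + j) := by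
  induction n with
  | zero => simp
  | succ n ih =>
    rw [Nat.cast_succ, ← add_assoc, hf _ (by positivity), ih, sum_range_succ, add_assoc]

theorem eqOn_Ioi_of_monotoneOn_of_add_one {f g : ℝ → ℝ} (hf : MonotoneOn f (Set.Ioi 0))
    (hg : MonotoneOn g (Set.Ioi 0)) (hf1 : ∀ x > 0, f (x + 1) = f x + 1 / x)
    (hg1 : ∀ x > 0, g (x + 1) = g x + 1 / x) (h1 : f 1 = g 1) : Set.EqOn f g (Set.Ioi 0) := by
  intro x (hx : 0 < x)
  -- `f - g` is `1`-periodic, and on `[n + 1, n + 1 + ⌈x⌉]`, which contains `x + n + 1`, both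
  -- functions start from the same value and rise by `∑_{j < ⌈x⌉} 1/(n + 1 + j) → 0`.
  set c := ⌈x⌉₊
  have hnat (n : ℕ) : f (1 + n) = g (1 + n) := by
    rw [add_natCast_eq_add_sum hf1 one_pos, add_natCast_eq_add_sum hg1 one_pos, h1]
  have hperiodic (n : ℕ) : f (x + n) - g (x + n) = f x - g x := by
    rw [add_natCast_eq_add_sum hf1 hx, add_natCast_eq_add_sum hg1 hx]; ring
  have hosc (n : ℕ) : f (1 + n + c) - f (1 + n) = ∑ j ∈ range c, 1 / ((n : ℝ) + (1 + j)) := by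
    rw [add_natCast_eq_add_sum hf1 (by positivity)]
    simp only [add_sub_cancel_left, add_comm (1 : ℝ), add_assoc]
  have hbound (n : ℕ) : |f x - g x| ≤ ∑ j ∈ range c, 1 / ((n : ℝ) + (1 + j)) := by
    have hlo : 1 + n ≤ x + (n + 1 : ℕ) := by push_cast; linarith
    have hhi : x + (n + 1 : ℕ) ≤ 1 + n + c := by push_cast; linarith [Nat.le_ceil x]
    have hpos {y : ℝ} (hy : 1 + n ≤ y) : y ∈ Set.Ioi 0 := by
      simp only [Set.mem_Ioi]; linarith [n.cast_nonneg (α := ℝ)]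
    have hf_lo := hf (hpos le_rfl) (hpos hlo) hlo
    have hf_hi := hf (hpos hlo) (hpos (hlo.trans hhi)) hhi
    have hg_lo := hg (hpos le_rfl) (hpos hlo) hlo
    have hg_hi := hg (hpos hlo) (hpos (hlo.trans hhi)) hhi
    have htop : f (1 + n + c) = g (1 + n + c) := by
      simpa only [Nat.cast_add, add_assoc] using hnat (n + c)
    rw [← hperiodic (n + 1), abs_le]
    constructor <;> linarith [hnat n, hosc n]
  have hlim : Tendsto (fun n : ℕ => ∑ j ∈ range c, 1 / ((n : ℝ) + (1 + j))) atTop (𝓝 0) := by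
    simpa using tendsto_finsetSum (range c) fun j _ => tendsto_one_div_natCast_add_atTop (1 + j)
  exact sub_eq_zero.mp (abs_nonpos_iff.mp (ge_of_tendsto' hlim hbound))

theorem eq_of_eqOn_Ioi_of_add_one {f g : ℝ → ℝ}
    (hf1 : ∀ x : ℝ, (∀ m : ℕ, x ≠ -m) → f (x + 1) = f x + 1 / x)
    (hg1 : ∀ x : ℝ, (∀ m : ℕ, x ≠ -m) → g (x + 1) = g x + 1 / x) (h : Set.EqOn f g (Set.Ioi 0))
    {x : ℝ} (hx : ∀ m : ℕ, x ≠ -m) : f x = g x := by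
  suffices ∀ n : ℕ, ∀ x : ℝ, -n < x → (∀ m : ℕ, x ≠ -m) → f x = g x from
    this (⌈-x⌉₊ + 1) x (by push_cast; linarith [Nat.le_ceil (-x)]) hx
  intro n
  induction n with
  | zero => exact fun x hx _ => h (by simpa using hx)
  | succ n ih =>
    intro x hxn hx
    have hx1 : ∀ m : ℕ, x + 1 ≠ -m := fun m h => hx (m + 1) (by push_cast; linarith)
    have := ih (x + 1) (by push_cast at hxn; linarith) hx1
    rw [hf1 x hx, hg1 x hx] at this
    linarith

theorem digamma_eq_digammaSeries {z : ℝ} (hz : ∀ m : ℕ, z ≠ -m) : digamma z = digammaSeries z := by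
  have hpole {x : ℝ} (hx : 0 < x) : ∀ m : ℕ, x ≠ -m := fun m h => by
    linarith [m.cast_nonneg (α := ℝ)]
  refine eq_of_eqOn_Ioi_of_add_one (fun x hx => digamma_add_one hx)
    (fun x _ => digammaSeries_add_one x) ?_ hz
  exact eqOn_Ioi_of_monotoneOn_of_add_one monotoneOn_digamma monotoneOn_digammaSeries
    (fun x hx => digamma_add_one (hpole hx)) (fun x _ => digammaSeries_add_one x)
    (digamma_one.trans digammaSeries_one.symm)

theorem hasSum_digamma_add_eulerMascheroniConstant {z : ℝ} (hz : ∀ m : ℕ, z ≠ -m) :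
    HasSum (fun m : ℕ => 1 / ((m : ℝ) + 1) - 1 / (m + z)) (digamma z + γ) := by
  rw [digamma_eq_digammaSeries hz, digammaSeries, neg_add_cancel_comm]
  exact (summable_one_div_add_sub_one_div 1 z).hasSum

theorem hasSum_one_div_mul_succ_add_sub (k : ℝ) {A : ℝ} (hA : 0 < A)
    (hz : ∀ m : ℕ, 1 + k / A ≠ -m) :
    HasSum (fun n : ℕ => 1 / (A * (n + 1) + k) - 1 / (A * (n + 1)))
      (-(1 / A) * (digamma (1 + k / A) + γ)) := by
  refine ((hasSum_digamma_add_eulerMascheroniConstant hz).mul_left (-(1 / A))).congr_fun fun n => ?_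
  have hn : (n : ℝ) + (1 + k / A) ≠ 0 := fun h => hz n (by linarith)
  have hA0 : A ≠ 0 := hA.ne'
  rw [show (n : ℝ) + (1 + k / A) = (A * (n + 1) + k) / A by field_simp; ring, one_div_div]
  field_simp
  ring

noncomputable def resolventTerm (k : ℝ) (n : ℕ) : ℝ := 1 / ((n : ℝ) + k) - 1 / n

theorem resolventTerm_succ (k : ℝ) (n : ℕ) :
    resolventTerm k (n + 1) = 1 / (((n : ℝ) + 1) + k) - 1 / ((n : ℝ) + 1) := by
  simp only [resolventTerm, Nat.cast_succ]

theorem isBigO_resolventTerm (k : ℝ) :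
    resolventTerm k =O[atTop] fun n => 1 / (n : ℝ) ^ 2 := by
  have := (isBigO_one_div_add_sub_one_div k 0).comp_tendsto tendsto_natCast_atTop_atTop
  unfold resolventTerm
  simpa only [Function.comp_def, add_zero] using this

theorem hasSum_resolventTerm_mul_succ {k : ℝ} (hk : ∀ m : ℕ, 1 ≤ m → k ≠ -(m : ℝ)) (a : ℕ) :
    HasSum (fun b : ℕ => resolventTerm k ((a + 1) * (b + 1)))
      (-(1 / ((a : ℝ) + 1)) * (digamma (1 + k / ((a : ℝ) + 1)) + γ)) := by
  have hz (m : ℕ) : 1 + k / ((a : ℝ) + 1) ≠ -m := fun h => by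
    refine hk ((a + 1) * (m + 1)) (Nat.mul_pos a.succ_pos m.succ_pos) ?_
    field_simp at h
    push_cast
    linarith
  simpa only [resolventTerm, Nat.cast_mul, Nat.cast_succ] using
    hasSum_one_div_mul_succ_add_sub k (by positivity : (0 : ℝ) < a + 1) hz

/-- The regularized trace of the resolvent `τ(k) = ∑ d(n)[1/(n+k) - 1/n]` converges
absolutely for real `k ∉ -ℕ` and satisfies `τ(k) = -∑ (1/n)[ψ(1 + k/n) + γ]`. -/
theorem regularized_resolvent_trace (k : ℝ) (hk : ∀ m : ℕ, 1 ≤ m → k ≠ -(m : ℝ)) :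
    Summable (fun n : ℕ =>
        |((Nat.divisors (n + 1)).card : ℝ) * (1 / (((n : ℝ) + 1) + k) - 1 / ((n : ℝ) + 1))|) ∧
    ∑' n : ℕ, ((Nat.divisors (n + 1)).card : ℝ) * (1 / (((n : ℝ) + 1) + k) - 1 / ((n : ℝ) + 1))
      = -∑' n : ℕ, (1 / ((n : ℝ) + 1)) *
          (digamma (1 + k / ((n : ℝ) + 1)) + Real.eulerMascheroniConstant) := by
  have hsum := summable_comp_mul_succ_succ_of_isBigO (isBigO_resolventTerm k)
  constructor
  · refine (hasSum_card_divisors_smul (f := fun n => |resolventTerm k n|)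
      hsum.abs.hasSum).summable.congr fun n => ?_
    rw [abs_mul, Nat.abs_cast, ← nsmul_eq_mul, resolventTerm_succ]
  · calc _ = ∑' n : ℕ, (n + 1).divisors.card • resolventTerm k (n + 1) := by
          simp only [nsmul_eq_mul, resolventTerm_succ]
      _ = ∑' p : ℕ × ℕ, resolventTerm k ((p.1 + 1) * (p.2 + 1)) :=
          (hasSum_card_divisors_smul hsum.hasSum).tsum_eq
      _ = _ := (hsum.hasSum.prod_fiberwise (hasSum_resolventTerm_mul_succ hk)).tsum_eq.symm
      _ = _ := by rw [← tsum_neg]; simp only [neg_mul]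
end

section
/- The function D(k²) := (1/2π) ∏_{n=1}^∞ (1 + k²/n²)^{d(n)} is entire in k, its zeros are exactly at k = ±i·l for l ∈ ℕ with order d(l), and it admits the factorization D(k²) = (1/2π) ∏_{n=1}^∞ sinh(πk/n)/(πk/n). -/
/-!
Expanding each factor `(1 + k²/n²)^{d(n)}` into one factor per factorisation `n = a b` turns the
product into the double product `∏_{a,b} (1 + k²/(ab)²)`, which converges absolutely and locally
uniformly because `∑ 1/(ab)² = ζ(2)² < ∞`. Hence it is entire and vanishes exactly where one of
its factors does, i.e. at `k = ± i l`; splitting off the `d(l)` factors with `ab = l` leaves an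
entire function that is nonzero at `± i l`, which gives the order of the zero. Multiplying first
over `b` instead, Euler's sine product gives `∏_b (1 + (k/a)²/b²) = sinh(πk/a)/(πk/a)`.
-/

open Complex Filter Topology

theorem hasProd_pow_card_divisors {α : Type*} [CommMonoid α] [TopologicalSpace α]
    [ContinuousMul α] [RegularSpace α] {g : ℕ → α} {a : α}
    (h : HasProd (fun p : ℕ+ × ℕ+ => g (p.1 * p.2)) a) :
    HasProd (fun n : ℕ+ => g n ^ (n : ℕ).divisors.card) a := by
  have hsigma : HasProd (fun x : Σ n : ℕ+, (n : ℕ).divisorsAntidiagonal => g x.1) a :=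
    (sigmaAntidiagonalEquivProd.hasProd_iff.2 h).congr_fun fun x =>
      congrArg g (divisorsAntidiagonalFactors_eq x.2).symm
  refine hsigma.sigma fun n => ?_
  convert hasProd_fintype (fun _ : (n : ℕ).divisorsAntidiagonal => g n) using 1
  rw [Finset.prod_const, Finset.card_univ, Fintype.card_coe, ← Nat.map_div_right_divisors,
    Finset.card_map]

theorem differentiable_tprod_one_add {ι : Type*} {u : ι → ℂ → ℂ}
    (hu : ∀ i, Differentiable ℂ (u i))
    (hb : ∀ R, ∃ b : ι → ℝ, Summable b ∧ ∀ i, ∀ k ∈ Metric.ball (0 : ℂ) R, ‖u i k‖ ≤ b i) :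
    Differentiable ℂ fun k => ∏' i, (1 + u i k) := by
  intro k₀
  obtain ⟨b, hb, hbound⟩ := hb (‖k₀‖ + 1)
  have hprod := hb.hasProdLocallyUniformlyOn_one_add Metric.isOpen_ball
    (Eventually.of_forall hbound) fun i => (hu i).continuous.continuousOn
  have hdiff := (hasProdLocallyUniformlyOn_iff_tendstoLocallyUniformlyOn.1 hprod).differentiableOn
    (Eventually.of_forall fun s => (Differentiable.fun_finsetProd fun i _ =>
      (differentiable_const 1).add (hu i)).differentiableOn) Metric.isOpen_ball
  exact hdiff.differentiableAt (Metric.isOpen_ball.mem_nhds (by simp))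

theorem sq_eq_neg_sq_iff {k x : ℂ} : k ^ 2 = -x ^ 2 ↔ k = I * x ∨ k = -(I * x) := by
  rw [← sq_eq_sq_iff_eq_or_eq_neg, mul_pow, I_sq, neg_one_mul]

theorem hasProd_one_add_sineTerm {z : ℂ} (hz : z ≠ 0) :
    HasProd (fun m : ℕ => 1 + sineTerm z m) (sin (Real.pi * z) / (Real.pi * z)) :=
  (multipliable_sineTerm z).hasProd_iff_tendsto_nat.2 (tendsto_euler_sin_prod' hz)

theorem summable_one_div_mul_sq :
    Summable fun p : ℕ+ × ℕ+ => 1 / ((p.1 * p.2 : ℕ) : ℝ) ^ 2 := by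
  have h : Summable fun n : ℕ+ => 1 / ((n : ℕ) : ℝ) ^ 2 :=
    (Real.summable_one_div_nat_pow.2 one_lt_two).comp_injective PNat.coe_injective
  refine (h.mul_of_nonneg h (fun _ => by positivity) fun _ => by positivity).congr fun p => ?_
  push_cast
  ring

section DivisorProduct

variable {w : ℕ → ℂ → ℂ} (hw : ∀ m k, ‖w m k‖ ≤ ‖k‖ ^ 2 / (m : ℝ) ^ 2)
include hw

theorem norm_comp_mul_le {R : ℝ} {k : ℂ} (hk : ‖k‖ ≤ R) (p : ℕ+ × ℕ+) :
    ‖w (p.1 * p.2) k‖ ≤ R ^ 2 * (1 / ((p.1 * p.2 : ℕ) : ℝ) ^ 2) := by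
  refine (hw _ k).trans ?_
  rw [mul_one_div]
  gcongr

theorem summable_norm_comp_mul (k : ℂ) : Summable fun p : ℕ+ × ℕ+ => ‖w (p.1 * p.2) k‖ :=
  (summable_one_div_mul_sq.mul_left _).of_nonneg_of_le (fun _ => norm_nonneg _)
    (norm_comp_mul_le hw le_rfl)

theorem hasProd_pow_card_divisors_one_add (k : ℂ) :
    HasProd (fun n : ℕ+ => (1 + w n k) ^ (n : ℕ).divisors.card)
      (∏' p : ℕ+ × ℕ+, (1 + w (p.1 * p.2) k)) :=
  hasProd_pow_card_divisors (g := fun m => 1 + w m k)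
    (multipliable_one_add_of_summable (summable_norm_comp_mul hw k)).hasProd

theorem differentiable_tprod_pow_card_divisors_one_add (hd : ∀ m, Differentiable ℂ (w m)) :
    Differentiable ℂ fun k => ∏' n : ℕ+, (1 + w n k) ^ (n : ℕ).divisors.card := by
  simp_rw [(hasProd_pow_card_divisors_one_add hw _).tprod_eq]
  exact differentiable_tprod_one_add (fun p => hd _) fun R =>
    ⟨_, summable_one_div_mul_sq.mul_left (R ^ 2), fun p k hk =>
      norm_comp_mul_le hw (mem_ball_zero_iff.1 hk).le p⟩

theorem tprod_pow_card_divisors_one_add_ne_zero {k : ℂ} (hk : ∀ n : ℕ+, 1 + w n k ≠ 0) :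
    ∏' n : ℕ+, (1 + w n k) ^ (n : ℕ).divisors.card ≠ 0 := by
  rw [(hasProd_pow_card_divisors_one_add hw k).tprod_eq]
  exact tprod_one_add_ne_zero_of_summable (fun p => hk (p.1 * p.2)) (summable_norm_comp_mul hw k)

end DivisorProduct

noncomputable def secularTerm (m : ℕ) (k : ℂ) : ℂ := k ^ 2 / (m : ℂ) ^ 2

noncomputable def secularProduct (k : ℂ) : ℂ :=
  ∏' n : ℕ+, (1 + secularTerm n k) ^ (n : ℕ).divisors.card

theorem norm_secularTerm_le (m : ℕ) (k : ℂ) : ‖secularTerm m k‖ ≤ ‖k‖ ^ 2 / (m : ℝ) ^ 2 := by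
  simp [secularTerm]

theorem differentiable_secularTerm (m : ℕ) : Differentiable ℂ (secularTerm m) := by
  unfold secularTerm
  fun_prop

theorem one_add_secularTerm_eq_zero_iff {m : ℕ} (hm : m ≠ 0) {k : ℂ} :
    1 + secularTerm m k = 0 ↔ k ^ 2 = -(m : ℂ) ^ 2 := by
  have : (m : ℂ) ^ 2 ≠ 0 := by positivity
  rw [secularTerm, add_div' _ _ _ this, div_eq_zero_iff, or_iff_left this]
  constructor <;> intro h <;> linear_combination h

theorem one_add_secularTerm_eq_mul {l : ℕ} (hl : l ≠ 0) {k₀ : ℂ} (hk₀ : k₀ ^ 2 = -(l : ℂ) ^ 2)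
    (k : ℂ) : 1 + secularTerm l k = (k - k₀) * (k + k₀) / (l : ℂ) ^ 2 := by
  have : (l : ℂ) ≠ 0 := by exact_mod_cast hl
  rw [secularTerm]
  field_simp
  linear_combination hk₀

theorem norm_ite_secularTerm_le (l m : ℕ) (k : ℂ) :
    ‖if m = l then 0 else secularTerm m k‖ ≤ ‖k‖ ^ 2 / (m : ℝ) ^ 2 := by
  split_ifs
  · rw [norm_zero]
    positivity
  · exact norm_secularTerm_le m k

theorem differentiable_secularProduct : Differentiable ℂ secularProduct :=
  differentiable_tprod_pow_card_divisors_one_add norm_secularTerm_le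
    differentiable_secularTerm

theorem secularProduct_eq_mul (l : ℕ+) (k : ℂ) :
    secularProduct k = (1 + secularTerm l k) ^ (l : ℕ).divisors.card *
      ∏' n : ℕ+, (1 + if (n : ℕ) = l then 0 else secularTerm n k) ^ (n : ℕ).divisors.card := by
  have hrest := (hasProd_pow_card_divisors_one_add (norm_ite_secularTerm_le l) k).multipliable
  refine (((hasProd_ite_eq l _).mul hrest.hasProd).congr_fun fun n => ?_).tprod_eq
  by_cases hn : n = l
  · simp [hn]
  · simp [hn, PNat.coe_inj]

theorem secularProduct_eq_zero_iff {k : ℂ} :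
    secularProduct k = 0 ↔ ∃ l : ℕ, 1 ≤ l ∧ k ^ 2 = -(l : ℂ) ^ 2 := by
  constructor
  · intro h
    by_contra! hk
    refine tprod_pow_card_divisors_one_add_ne_zero norm_secularTerm_le
      (fun n hn => hk n n.pos ?_) h
    exact (one_add_secularTerm_eq_zero_iff n.ne_zero).1 hn
  · rintro ⟨l, hl, hk⟩
    rw [secularProduct_eq_mul ⟨l, hl⟩, PNat.mk_coe,
      (one_add_secularTerm_eq_zero_iff (by omega)).2 hk,
      zero_pow (Nat.nonempty_divisors.2 (by omega)).card_pos.ne', zero_mul]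

theorem exists_secularProduct_eq_pow_mul {l : ℕ} (hl : l ≠ 0) {k₀ : ℂ}
    (hk₀ : k₀ ^ 2 = -(l : ℂ) ^ 2) :
    ∃ g : ℂ → ℂ, Differentiable ℂ g ∧ g k₀ ≠ 0 ∧
      ∀ k, secularProduct k = (k - k₀) ^ l.divisors.card * g k := by
  have hk₀ne : k₀ ≠ 0 := by
    rintro rfl
    have : (l : ℂ) ≠ 0 := by exact_mod_cast hl
    exact this (pow_eq_zero_iff two_ne_zero |>.1 (by linear_combination hk₀))
  refine ⟨fun k => (k + k₀) ^ l.divisors.card / ((l : ℂ) ^ 2) ^ l.divisors.card *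
    ∏' n : ℕ+, (1 + if (n : ℕ) = l then 0 else secularTerm n k) ^ (n : ℕ).divisors.card,
    ?_, ?_, fun k => ?_⟩
  · refine Differentiable.mul (by fun_prop) <|
      differentiable_tprod_pow_card_divisors_one_add (norm_ite_secularTerm_le l) fun m => ?_
    split_ifs
    · exact differentiable_const 0
    · exact differentiable_secularTerm m
  · refine mul_ne_zero (div_ne_zero (pow_ne_zero _ ?_) (by positivity)) <|
      tprod_pow_card_divisors_one_add_ne_zero (norm_ite_secularTerm_le l) fun n => ?_
    · rw [← two_mul]
      exact mul_ne_zero two_ne_zero hk₀ne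
    split_ifs with hn
    · simp
    rw [Ne, one_add_secularTerm_eq_zero_iff n.ne_zero]
    intro h
    have : ((n : ℕ) : ℂ) ^ 2 = (l : ℂ) ^ 2 := by linear_combination h - hk₀
    exact hn (Nat.pow_left_injective two_ne_zero (by exact_mod_cast this))
  · rw [secularProduct_eq_mul ⟨l, Nat.pos_of_ne_zero hl⟩, PNat.mk_coe,
      one_add_secularTerm_eq_mul hl hk₀, div_pow, mul_pow]
    ring

theorem hasProd_one_add_secularTerm_mul {k : ℂ} (hk : k ≠ 0) (a : ℕ+) :
    HasProd (fun b : ℕ+ => 1 + secularTerm ((a : ℕ) * b) k)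
      (sinh (Real.pi * k / a) / (Real.pi * k / a)) := by
  have ha : ((a : ℕ) : ℂ) ≠ 0 := by exact_mod_cast a.ne_zero
  have h := hasProd_one_add_sineTerm (mul_ne_zero I_ne_zero (div_ne_zero hk ha))
  rw [← Equiv.pnatEquivNat.hasProd_iff] at h
  convert h using 1
  · funext b
    have hb : ((b.natPred : ℕ) : ℂ) + 1 = (b : ℕ) := by exact_mod_cast b.natPred_add_one
    rw [Function.comp_apply, Equiv.pnatEquivNat_apply, sineTerm, hb, secularTerm]
    push_cast
    field_simp
    rw [I_sq]
    ring
  · rw [show (Real.pi : ℂ) * (I * (k / a)) = Real.pi * k / a * I by ring, sin_mul_I,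
      mul_div_mul_right _ _ I_ne_zero]

theorem secularProduct_eq_tprod_sinh {k : ℂ} (hk : k ≠ 0) :
    secularProduct k = ∏' n : ℕ+, sinh (Real.pi * k / n) / (Real.pi * k / n) := by
  rw [secularProduct, (hasProd_pow_card_divisors_one_add norm_secularTerm_le k).tprod_eq]
  exact ((multipliable_one_add_of_summable
    (summable_norm_comp_mul norm_secularTerm_le k)).hasProd.prod_fiberwise
    (hasProd_one_add_secularTerm_mul hk)).tprod_eq.symm

theorem tprod_nat_eq_secularProduct (k : ℂ) :
    ∏' n : ℕ, (1 + k ^ 2 / ((n : ℂ) + 1) ^ 2) ^ (Nat.divisors (n + 1)).card =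
      secularProduct k := by
  rw [secularProduct,
    tprod_pnat_eq_tprod_succ (f := fun n => (1 + secularTerm n k) ^ n.divisors.card)]
  simp [secularTerm]

/-- The function `D(k²) = (1/2π) ∏ₙ (1 + k²/n²)^{d(n)}` is entire in `k`, its zeros are
exactly `k = ± i l`, `l ∈ ℕ`, `l ≥ 1`, with order `d(l)`, and it admits the factorization
`D(k²) = (1/2π) ∏ₙ sinh(πk/n)/(πk/n)` (for `k ≠ 0`, where no factor is singular). -/
theorem secular_determinant :
    ∃ F : ℂ → ℂ,
      Differentiable ℂ F ∧
      (∀ k : ℂ, F k = (1 / (2 * (Real.pi : ℂ))) *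
          ∏' n : ℕ, (1 + k ^ 2 / ((n : ℂ) + 1) ^ 2) ^ (Nat.divisors (n + 1)).card) ∧
      (∀ k : ℂ, F k = 0 ↔ ∃ l : ℕ, 1 ≤ l ∧ (k = Complex.I * l ∨ k = -(Complex.I * l))) ∧
      (∀ l : ℕ, 1 ≤ l → ∀ k₀ : ℂ, (k₀ = Complex.I * l ∨ k₀ = -(Complex.I * l)) →
        ∃ g : ℂ → ℂ, AnalyticAt ℂ g k₀ ∧ g k₀ ≠ 0 ∧
          ∀ᶠ k in nhds k₀, F k = (k - k₀) ^ (Nat.divisors l).card * g k) ∧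
      (∀ k : ℂ, k ≠ 0 → F k = (1 / (2 * (Real.pi : ℂ))) *
          ∏' n : ℕ, Complex.sinh ((Real.pi : ℂ) * k / ((n : ℂ) + 1))
            / ((Real.pi : ℂ) * k / ((n : ℂ) + 1))) := by
  have hc : 1 / (2 * (Real.pi : ℂ)) ≠ 0 := by simp [Real.pi_ne_zero]
  refine ⟨fun k => 1 / (2 * Real.pi) * secularProduct k,
    differentiable_secularProduct.const_mul _, fun k => by rw [tprod_nat_eq_secularProduct],
    fun k => ?_, fun l hl k₀ hk₀ => ?_, fun k hk => ?_⟩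
  · simp only [mul_eq_zero, hc, false_or, secularProduct_eq_zero_iff, sq_eq_neg_sq_iff]
  · obtain ⟨g, hg, hg₀, hfac⟩ :=
      exists_secularProduct_eq_pow_mul (by omega) (sq_eq_neg_sq_iff.2 hk₀)
    refine ⟨fun k => 1 / (2 * Real.pi) * g k, (hg.const_mul _).analyticAt k₀,
      mul_ne_zero hc hg₀, Eventually.of_forall fun k => ?_⟩
    simp only [hfac]
    ring
  · dsimp only
    rw [secularProduct_eq_tprod_sinh hk,
      tprod_pnat_eq_tprod_succ (f := fun n : ℕ => sinh (Real.pi * k / n) / (Real.pi * k / n))]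
    push_cast
    rfl
end

section
/- The secular determinant satisfies D(k²) = (1/2π) · 1/(Γ̃(ik) Γ̃(-ik)) for all k ∈ ℂ, where Γ̃ is the generalized gamma function. -/
/-!
The exponentials `exp (±γ̃ z)` and `exp (∓z/n)` cancel and `(1 + w)(1 - w) = 1 - w²`, so the
Weierstrass products of `1/Γ̃(z)` and `1/Γ̃(-z)` multiply termwise to `∏ (1 - z²/n²)^d(n)`, which
at `z = ik` is the product defining `D(k²)`. Multiplying termwise needs both products to converge;
this follows from `(1 + w) e^{-w} - 1 = O(|w|²)` and `∑ d(n)/n² = ζ(2)² < ∞`.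
-/

open Filter

/-- The reciprocal `1/Γ̃` of the generalized gamma function, defined by its
Weierstrass product with `γ̃ = γ² - 2γ₁`. -/
noncomputable def recipGammaTilde (γ₁ : ℝ) (k : ℂ) : ℂ :=
  Complex.exp (((Real.eulerMascheroniConstant ^ 2 - 2 * γ₁ : ℝ) : ℂ) * k) *
    ∏' n : ℕ, ((1 + k / ((n : ℂ) + 1)) *
        Complex.exp (-(k / ((n : ℂ) + 1)))) ^ (Nat.divisors (n + 1)).card

/-- The generalized gamma function `Γ̃`. -/
noncomputable def gammaTilde (γ₁ : ℝ) (k : ℂ) : ℂ := (recipGammaTilde γ₁ k)⁻¹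

open ArithmeticFunction in
theorem ArithmeticFunction.LSeriesSummable_sigma_zero {s : ℂ} (hs : 1 < s.re) :
    LSeriesSummable (fun n => (sigma 0 n : ℂ)) s := by
  have hζ : LSeriesSummable ((zeta : ArithmeticFunction ℂ) ·) s := by
    simpa using LSeriesSummable_zeta_iff.2 hs
  rw [← zeta_mul_pow_eq_sigma, pow_zero_eq_zeta]
  simpa [← natCoe_mul] using LSeriesSummable_mul hζ hζ

theorem Nat.summable_card_divisors_succ_div_sq :
    Summable fun n : ℕ => ((n + 1).divisors.card : ℝ) / ((n : ℝ) + 1) ^ 2 := by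
  have := (ArithmeticFunction.LSeriesSummable_sigma_zero (s := 2) (by norm_num)).norm
  refine ((summable_nat_add_iff 1).2 this).congr fun n => ?_
  rw [LSeries.norm_term_eq]
  simp [ArithmeticFunction.sigma_zero_apply]

theorem norm_pow_sub_one_le_exp {R : Type*} [NormedCommRing R] [NormOneClass R] (x : R) (d : ℕ) :
    ‖x ^ d - 1‖ ≤ Real.exp (d * ‖x - 1‖) - 1 := by
  simpa using (Finset.range d).norm_prod_one_add_sub_one_le fun _ => x - 1

theorem multipliable_pow_of_summable_mul_norm_sub_one {R : Type*} [NormedCommRing R]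
    [NormOneClass R] [CompleteSpace R] {f : ℕ → R} {d : ℕ → ℕ}
    (h : Summable fun n => d n * ‖f n - 1‖) : Multipliable fun n => f n ^ d n := by
  suffices Summable fun n => ‖f n ^ d n - 1‖ by
    simpa using multipliable_one_add_of_summable this
  refine Summable.of_norm_bounded_eventually (h.mul_left 2) ?_
  rw [Nat.cofinite_eq_atTop]
  filter_upwards [h.tendsto_atTop_zero.eventually_le_const one_pos] with n hn
  have hnonneg : 0 ≤ (d n : ℝ) * ‖f n - 1‖ := by positivity
  calc ‖‖f n ^ d n - 1‖‖ ≤ Real.exp (d n * ‖f n - 1‖) - 1 := by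
        rw [norm_norm]; exact norm_pow_sub_one_le_exp _ _
    _ ≤ 2 * (d n * ‖f n - 1‖) := by
        have := Real.abs_exp_sub_one_le (x := d n * ‖f n - 1‖) (by rwa [abs_of_nonneg hnonneg])
        rw [abs_of_nonneg hnonneg] at this
        exact (le_abs_self _).trans this

theorem norm_one_add_mul_exp_neg_sub_one_le {w : ℂ} (hw : ‖w‖ ≤ 1) :
    ‖(1 + w) * Complex.exp (-w) - 1‖ ≤ 3 * ‖w‖ ^ 2 := by
  have hw' : ‖-w‖ ≤ 1 := by rwa [norm_neg]
  calc ‖(1 + w) * Complex.exp (-w) - 1‖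
      = ‖(Complex.exp (-w) - 1 - (-w)) + w * (Complex.exp (-w) - 1)‖ := by ring_nf
    _ ≤ ‖Complex.exp (-w) - 1 - (-w)‖ + ‖w‖ * ‖Complex.exp (-w) - 1‖ :=
        (norm_add_le _ _).trans_eq (by rw [norm_mul])
    _ ≤ ‖-w‖ ^ 2 + ‖w‖ * (2 * ‖-w‖) := by
        gcongr
        exacts [Complex.norm_exp_sub_one_sub_id_le hw', Complex.norm_exp_sub_one_le hw']
    _ = 3 * ‖w‖ ^ 2 := by rw [norm_neg]; ring

theorem multipliable_one_add_div_mul_exp_pow_card_divisors (z : ℂ) :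
    Multipliable fun n : ℕ => ((1 + z / ((n : ℂ) + 1)) *
      Complex.exp (-(z / ((n : ℂ) + 1)))) ^ (Nat.divisors (n + 1)).card := by
  apply multipliable_pow_of_summable_mul_norm_sub_one
  refine Summable.of_norm_bounded_eventually
    (Nat.summable_card_divisors_succ_div_sq.mul_left (3 * ‖z‖ ^ 2)) ?_
  rw [Nat.cofinite_eq_atTop]
  filter_upwards [eventually_ge_atTop ⌈‖z‖⌉₊] with n hn
  have hn1 : (0 : ℝ) < n + 1 := by positivity
  have hnorm : ‖z / ((n : ℂ) + 1)‖ = ‖z‖ / (n + 1) := by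
    rw [norm_div, ← Nat.cast_succ, Complex.norm_natCast, Nat.cast_succ]
  have hsmall : ‖z / ((n : ℂ) + 1)‖ ≤ 1 := by
    rw [hnorm, div_le_one hn1]
    linarith [Nat.le_ceil ‖z‖, (Nat.cast_le (α := ℝ)).2 hn]
  rw [Real.norm_of_nonneg (by positivity)]
  calc ((n + 1).divisors.card : ℝ) * ‖(1 + z / ((n : ℂ) + 1)) *
        Complex.exp (-(z / ((n : ℂ) + 1))) - 1‖
      ≤ (n + 1).divisors.card * (3 * (‖z‖ / (n + 1)) ^ 2) := by
        rw [← hnorm]; gcongr; exact norm_one_add_mul_exp_neg_sub_one_le hsmall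
    _ = 3 * ‖z‖ ^ 2 * (((n + 1).divisors.card : ℝ) / ((n : ℝ) + 1) ^ 2) := by
        rw [div_pow]; ring

theorem recipGammaTilde_mul_neg (γ₁ : ℝ) (z : ℂ) :
    recipGammaTilde γ₁ z * recipGammaTilde γ₁ (-z) =
      ∏' n : ℕ, (1 - z ^ 2 / ((n : ℂ) + 1) ^ 2) ^ (Nat.divisors (n + 1)).card := by
  rw [recipGammaTilde, recipGammaTilde, mul_mul_mul_comm, ← Complex.exp_add, mul_neg,
    add_neg_cancel, Complex.exp_zero, one_mul,
    ← (multipliable_one_add_div_mul_exp_pow_card_divisors z).tprod_mul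
      (multipliable_one_add_div_mul_exp_pow_card_divisors (-z))]
  refine tprod_congr fun n => ?_
  rw [← mul_pow, neg_div, neg_neg, mul_mul_mul_comm, ← Complex.exp_add, neg_add_cancel,
    Complex.exp_zero, mul_one, ← div_pow]
  ring

theorem secular_determinant_gammaTilde_general (γ₁ : ℝ) (k : ℂ) :
    (1 / (2 * (Real.pi : ℂ))) *
        ∏' n : ℕ, (1 + k ^ 2 / ((n : ℂ) + 1) ^ 2) ^ (Nat.divisors (n + 1)).card
      = (1 / (2 * (Real.pi : ℂ))) *
          (gammaTilde γ₁ (Complex.I * k) * gammaTilde γ₁ (-(Complex.I * k)))⁻¹ := by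
  rw [gammaTilde, gammaTilde, ← mul_inv, inv_inv, recipGammaTilde_mul_neg]
  congr 2 with n
  rw [mul_pow, Complex.I_sq]
  ring

/-- The secular determinant satisfies `D(k²) = (1/2π) · 1/(Γ̃(ik) Γ̃(-ik))` for all `k ∈ ℂ`. -/
theorem secular_determinant_gammaTilde (γ₁ : ℝ)
    (hγ₁ : Tendsto (fun m : ℕ =>
        (∑ l ∈ Finset.Icc 1 m, Real.log l / l) - (Real.log m) ^ 2 / 2) atTop (nhds γ₁))
    (k : ℂ) :
    (1 / (2 * (Real.pi : ℂ))) *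
        ∏' n : ℕ, (1 + k ^ 2 / ((n : ℂ) + 1) ^ 2) ^ (Nat.divisors (n + 1)).card
      = (1 / (2 * (Real.pi : ℂ))) *
          (gammaTilde γ₁ (Complex.I * k) * gammaTilde γ₁ (-(Complex.I * k)))⁻¹ :=
  secular_determinant_gammaTilde_general γ₁ k
end
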